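/- arXiv:2601.02768 — 2 statements merged into one kernel-verified Lean document; each statement's English description precedes it below -/
import Mathlib

section
/- Let K be a field and p, q integers with p, q ≥ 2. Let M be a p×q matrix over K of rank 1 such that rank(E_{11} + M) ≤ 1 and rank(E_{22} + M) ≤ 1. Then there exists a scalar c ∈ K such that M = c·E_{12} or M = c·E_{21}. -/
/-!
A matrix of rank at most one has all its `2 × 2` minors equal to zero. Applied to
`E₁₁ + M` and `M`, the minors through the entry `(1, 1)` show that `M` vanishes off
row `1` and column `1`; likewise `E₂₂ + M` forces `M` to vanish off row `2` and column `2`.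
So `M` is supported on `{(1, 2), (2, 1)}`, and the minor of `M` on rows and columns
`{1, 2}` shows that one of these two entries vanishes.
-/

namespace Matrix

variable {K m n : Type*}

theorem eq_single_of_apply_ne_zero {α : Type*} [Zero α] [DecidableEq m] [DecidableEq n]
    {M : Matrix m n α} {a : m} {b : n} (h : ∀ i j, M i j ≠ 0 → i = a ∧ j = b) :
    M = single a b (M a b) := by
  ext i j
  by_cases hij : i = a ∧ j = b
  · rw [hij.1, hij.2, single_apply_same]
  · rw [single_apply_of_ne _ _ _ _ _ fun h' => hij ⟨h'.1.symm, h'.2.symm⟩]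
    exact not_not.mp (mt (h i j) hij)

variable [Field K] [Fintype n]

theorem exists_col_eq_smul_of_rank_le_one {N : Matrix m n K} (hN : N.rank ≤ 1) :
    ∃ v : m → K, ∀ k, ∃ a : K, ∀ i, N i k = a * v i := by
  classical
  have hrank : Module.rank K (LinearMap.range N.mulVecLin) ≤ 1 := by
    exact_mod_cast FiniteDimensional.finrank_le_iff_rank_le.mp hN
  obtain ⟨v, hv⟩ := (rank_submodule_le_one_iff' _).mp hrank
  refine ⟨v, fun k => ?_⟩
  obtain ⟨a, ha⟩ :=
    Submodule.mem_span_singleton.mp (hv ⟨Pi.single k 1, N.mulVec_single_one k⟩)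
  exact ⟨a, fun i => (congrFun ha i).symm⟩

theorem mul_eq_mul_of_rank_le_one {N : Matrix m n K} (hN : N.rank ≤ 1)
    (i j : m) (k l : n) : N i k * N j l = N i l * N j k := by
  obtain ⟨v, hv⟩ := exists_col_eq_smul_of_rank_le_one hN
  obtain ⟨a, ha⟩ := hv k
  obtain ⟨b, hb⟩ := hv l
  rw [ha i, ha j, hb i, hb j]
  ring

variable [DecidableEq m] [DecidableEq n]

theorem apply_eq_zero_of_rank_single_add_le_one {M : Matrix m n K} (hM : M.rank ≤ 1)
    {i₀ : m} {j₀ : n} {c : K} (hc : c ≠ 0) (h : (single i₀ j₀ c + M).rank ≤ 1)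
    {i : m} {j : n} (hi : i ≠ i₀) (hj : j ≠ j₀) : M i j = 0 := by
  have hminor := mul_eq_mul_of_rank_le_one h i₀ i j₀ j
  simp only [add_apply, single_apply_same, single_apply_of_row_ne hi.symm,
    single_apply_of_col_ne _ _ hj.symm, zero_add] at hminor
  have hc_mul : c * M i j = 0 := by
    linear_combination hminor - mul_eq_mul_of_rank_le_one hM i₀ i j₀ j
  exact (mul_eq_zero.mp hc_mul).resolve_left hc

theorem eq_single_or_eq_single_of_rank_single_add_le_one {M : Matrix m n K} (hM : M.rank ≤ 1)
    {i₀ i₁ : m} {j₀ j₁ : n} (hi : i₀ ≠ i₁) (hj : j₀ ≠ j₁)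
    (h₀ : (single i₀ j₀ 1 + M).rank ≤ 1) (h₁ : (single i₁ j₁ 1 + M).rank ≤ 1) :
    M = single i₀ j₁ (M i₀ j₁) ∨ M = single i₁ j₀ (M i₁ j₀) := by
  have vanish₀ {i j} : i ≠ i₀ → j ≠ j₀ → M i j = 0 :=
    apply_eq_zero_of_rank_single_add_le_one hM one_ne_zero h₀
  have vanish₁ {i j} : i ≠ i₁ → j ≠ j₁ → M i j = 0 :=
    apply_eq_zero_of_rank_single_add_le_one hM one_ne_zero h₁
  have support {i j} (hij : M i j ≠ 0) : i = i₀ ∧ j = j₁ ∨ i = i₁ ∧ j = j₀ := by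
    have h₀' : i = i₀ ∨ j = j₀ := by
      by_contra! h
      exact hij (vanish₀ h.1 h.2)
    have h₁' : i = i₁ ∨ j = j₁ := by
      by_contra! h
      exact hij (vanish₁ h.1 h.2)
    grind
  have hprod : M i₀ j₁ * M i₁ j₀ = 0 := by
    rw [mul_eq_mul_of_rank_le_one hM i₀ i₁ j₁ j₀, vanish₁ hi hj, zero_mul]
  rcases mul_eq_zero.mp hprod with h | h
  · refine Or.inr (eq_single_of_apply_ne_zero fun i j hij => (support hij).resolve_left ?_)
    rintro ⟨rfl, rfl⟩
    exact hij h
  · refine Or.inl (eq_single_of_apply_ne_zero fun i j hij => (support hij).resolve_right ?_)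
    rintro ⟨rfl, rfl⟩
    exact hij h

end Matrix

/-- Let `K` be a field, `p, q ≥ 2`, and `M` a rank-one `p × q` matrix over `K` such that
both `E₁₁ + M` and `E₂₂ + M` have rank at most `1`. Then `M` is a scalar multiple of
`E₁₂` or of `E₂₁`. -/
theorem rank_one_matrix_eq_smul_stdBasis_of_rank_add_le_one
    {K : Type*} [Field K] (p q : ℕ) (hp : 2 ≤ p) (hq : 2 ≤ q)
    (M : Matrix (Fin p) (Fin q) K) (hM : M.rank = 1)
    (h11 : (Matrix.single (⟨0, by omega⟩ : Fin p) (⟨0, by omega⟩ : Fin q) (1 : K)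
        + M).rank ≤ 1)
    (h22 : (Matrix.single (⟨1, by omega⟩ : Fin p) (⟨1, by omega⟩ : Fin q) (1 : K)
        + M).rank ≤ 1) :
    ∃ c : K,
      M = c • Matrix.single (⟨0, by omega⟩ : Fin p) (⟨1, by omega⟩ : Fin q) (1 : K)
      ∨ M = c • Matrix.single (⟨1, by omega⟩ : Fin p) (⟨0, by omega⟩ : Fin q) (1 : K) := by
  simp only [Matrix.smul_single, smul_eq_mul, mul_one]
  rcases Matrix.eq_single_or_eq_single_of_rank_single_add_le_one hM.le
    (by simp [Fin.ext_iff]) (by simp [Fin.ext_iff]) h11 h22 with h | h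
  · exact ⟨_, Or.inl h⟩
  · exact ⟨_, Or.inr h⟩
end

section
/- Let K be a field and p, s integers with 1 ≤ p < s < 2p, and set n = 2p. Let e_1,…,e_n be the standard basis of K^n and E_1 the subspace spanned by e_1,…,e_s. For a subspace W of K^n write W^⊥ = {v ∈ K^n : Σ_{i=1}^n w_i v_i = 0 for all w ∈ W}. Then there is no K-linear automorphism g of K^n such that g(W^⊥) ⊆ E_1 for every p-dimensional subspace W of E_1. -/
set_option maxHeartbeats 1000000


/-- The orthogonal complement of a subspace `W` of `K^n` with respect to the
standard bilinear form `(w, v) ↦ ∑ i, w i * v i`. -/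
def dotPerp {K : Type*} [Field K] {n : ℕ} (W : Submodule K (Fin n → K)) :
    Submodule K (Fin n → K) where
  carrier := {v | ∀ w ∈ W, ∑ i, w i * v i = 0}
  zero_mem' := by intro w hw; simp
  add_mem' := by
    intro a b ha hb w hw
    simp only [Set.mem_setOf_eq] at ha hb
    simp only [Pi.add_apply, mul_add, Finset.sum_add_distrib, ha w hw, hb w hw, add_zero]
  smul_mem' := by
    intro c a ha w hw
    simp only [Set.mem_setOf_eq] at ha
    have h : ∀ i, w i * (c • a) i = c * (w i * a i) := fun i => by
      simp only [Pi.smul_apply, smul_eq_mul]; ring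
    calc ∑ i, w i * (c • a) i = ∑ i, c * (w i * a i) := by simp_rw [h]
      _ = c * ∑ i, w i * a i := by rw [Finset.mul_sum]
      _ = 0 := by rw [ha w hw, mul_zero]

section aux
variable {K : Type*} [Field K] {n : ℕ}

lemma coord_zero_of_mem_span {T : Set (Fin n)} {v : Fin n → K}
    (hv : v ∈ Submodule.span K ((fun i : Fin n => Pi.single i (1 : K)) '' T))
    {j : Fin n} (hj : j ∉ T) : v j = 0 := by
  have : Submodule.span K ((fun i : Fin n => Pi.single i (1 : K)) '' T) ≤
      LinearMap.ker (LinearMap.proj (R := K) (φ := fun _ : Fin n => K) j) := by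
    rw [Submodule.span_le]
    rintro _ ⟨i, hi, rfl⟩
    have : i ≠ j := fun h => hj (h ▸ hi)
    simp [LinearMap.mem_ker, Pi.single_apply, this]
  simpa using this hv

lemma single_linearIndependent :
    LinearIndependent K (fun i : Fin n => Pi.single i (1 : K)) := by
  have := (Pi.basisFun K (Fin n)).linearIndependent
  convert this using 1
  ext i j
  simp [Pi.basisFun_apply, Pi.single_apply]

lemma mem_dotPerp {W : Submodule K (Fin n → K)} {v : Fin n → K} :
    v ∈ dotPerp W ↔ ∀ w ∈ W, ∑ i, w i * v i = 0 := Iff.rfl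

end aux

/-- Let `K` be a field and `1 ≤ p < s < 2p`, `n = 2p`, and let `E₁ ⊆ K^n` be the span
of the first `s` standard basis vectors.  There is no linear automorphism `g` of `K^n`
mapping `W^⊥` into `E₁` for every `p`-dimensional subspace `W ⊆ E₁`. -/
theorem no_automorphism_maps_perps_into_E1
    {K : Type*} [Field K] (p s : ℕ) (hp : 1 ≤ p) (hps : p < s) (hs : s < 2 * p) :
    ¬ ∃ g : (Fin (2 * p) → K) ≃ₗ[K] (Fin (2 * p) → K),
      ∀ W : Submodule K (Fin (2 * p) → K),
        W ≤ Submodule.span K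
            ((fun i : Fin (2 * p) => Pi.single i (1 : K)) '' {i | (i : ℕ) < s}) →
        Module.finrank K W = p →
        (dotPerp W).map (g : (Fin (2 * p) → K) →ₗ[K] (Fin (2 * p) → K)) ≤
          Submodule.span K
            ((fun i : Fin (2 * p) => Pi.single i (1 : K)) '' {i | (i : ℕ) < s}) := by
  rintro ⟨g, hg⟩
  set E : Submodule K (Fin (2 * p) → K) :=
    Submodule.span K ((fun i : Fin (2 * p) => Pi.single i (1 : K)) '' {i | (i : ℕ) < s})
    with hE
  -- Step 1: every g(e_i) lands in E
  have key : ∀ i : Fin (2 * p), g (Pi.single i (1 : K)) ∈ E := by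
    intro i
    set F : Finset (Fin (2 * p)) := Finset.Iio ⟨s, hs⟩ with hF
    have hFcard : F.card = s := by simp [hF, Fin.card_Iio]
    have hcard : p ≤ (F.erase i).card := by
      have := Finset.pred_card_le_card_erase (a := i) (s := F)
      omega
    obtain ⟨S, hSsub, hScard⟩ := Finset.exists_subset_card_eq hcard
    have hiS : i ∉ S := fun h => (Finset.notMem_erase i F) (hSsub h)
    have hSlt : ∀ j ∈ S, (j : ℕ) < s := by
      intro j hj
      have : j ∈ F := Finset.erase_subset _ _ (hSsub hj)
      simpa [hF, Fin.lt_def] using this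
    set W : Submodule K (Fin (2 * p) → K) :=
      Submodule.span K ((fun i : Fin (2 * p) => Pi.single i (1 : K)) '' ↑S) with hW
    have hWE : W ≤ E :=
      Submodule.span_mono (Set.image_mono (fun j hj => hSlt j hj))
    have hrank : Module.finrank K W = p := by
      have hli := single_linearIndependent (K := K) (n := 2 * p) |>.comp
          (Subtype.val : {x // x ∈ S} → Fin (2 * p)) Subtype.val_injective
      have hrange : Set.range ((fun i : Fin (2 * p) => Pi.single i (1 : K)) ∘
          (Subtype.val : {x // x ∈ S} → Fin (2 * p)))
          = (fun i : Fin (2 * p) => Pi.single i (1 : K)) '' ↑S := by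
        rw [Set.range_comp, Subtype.range_val_subtype]; rfl
      rw [hW, ← hrange, finrank_span_eq_card hli, Fintype.card_coe, hScard]
    have hperp : Pi.single i (1 : K) ∈ dotPerp W := by
      rw [mem_dotPerp]
      intro w hw
      have hwi : w i = 0 := coord_zero_of_mem_span hw (by simpa using hiS)
      simp [Pi.single_apply, mul_ite, hwi]
    exact hg W hWE hrank ⟨Pi.single i 1, hperp, rfl⟩
  -- Step 2: then g is not surjective onto the last coordinate direction
  have hlast : (⟨2 * p - 1, by omega⟩ : Fin (2 * p)) ∉ {i : Fin (2 * p) | (i : ℕ) < s} := by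
    simp; omega
  obtain ⟨x, hx⟩ := g.surjective (Pi.single ⟨2 * p - 1, by omega⟩ (1 : K))
  have hxsum : x = ∑ j, x j • (Pi.single j (1 : K) : Fin (2 * p) → K) := by
    funext k
    simp [Finset.sum_apply, Pi.single_apply, mul_ite]
  have hmemE : Pi.single (⟨2 * p - 1, by omega⟩ : Fin (2 * p)) (1 : K) ∈ E := by
    rw [← hx, hxsum]
    simp only [map_sum, map_smul]
    exact Submodule.sum_mem E fun j _ => Submodule.smul_mem E _ (key j)
  have := coord_zero_of_mem_span hmemE hlast
  simp at this
end
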